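/- arXiv:2202.03613 — 2 statements merged into one kernel-verified Lean document; each statement's English description precedes it below -/
import Mathlib

section
/- Data Z_1, ..., Z_n, Z_{n+1} generated under feedback covariate shift are pseudo-exchangeable random variables with core function h(z_1, ..., z_{n+1}) = Π_{i=1}^{n+1} p_X(x_i) p_{Y|X}(y_i | x_i) and factor functions g_i(z_i; z_{-i}) = 1 for i = 1, ..., n, and g_{n+1}(z_{n+1}; z_{1:n}) = v(x_{n+1}; z_{1:n}), where v(x; D) = p̃_{X;D}(x) / p_X(x) is the likelihood ratio between the test input density induced by the data multiset D and the training input density. -/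
open MeasureTheory ProbabilityTheory
open scoped BigOperators ENNReal

noncomputable section

/-- The multiset of all values of a finite tuple. -/
def allOf {Z : Type*} {n : ℕ} (v : Fin n → Z) : Multiset Z :=
  Finset.univ.val.map v

/-- The multiset of all values of the tuple except (one occurrence of) the `i`-th one. -/
def others {Z : Type*} [DecidableEq Z] {n : ℕ} (v : Fin n → Z) (i : Fin n) : Multiset Z :=
  (allOf v).erase (v i)

/-- The pseudo-exchangeable form of a joint density. -/
def peDensity {Z : Type*} [DecidableEq Z] {n : ℕ}
    (g : Fin (n + 1) → Z → Multiset Z → ℝ) (h : Multiset Z → ℝ)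
    (v : Fin (n + 1) → Z) : ℝ :=
  (∏ i, g i (v i) (others v i)) * h (allOf v)

/-- Pseudo-exchangeability of random variables with factor functions `g` and core `h`. -/
def IsPseudoExchangeable {Ω Z : Type*} [MeasurableSpace Ω] [MeasurableSpace Z] [DecidableEq Z]
    {n : ℕ} (P : Measure Ω) (Zf : Fin (n + 1) → Ω → Z) (ν : Measure Z)
    (g : Fin (n + 1) → Z → Multiset Z → ℝ) (h : Multiset Z → ℝ) : Prop :=
  P.map (fun ω i => Zf i ω)
    = (Measure.pi fun _ : Fin (n + 1) => ν).withDensity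
        fun v => ENNReal.ofReal (peDensity g h v)

/-- The joint density of data generated under feedback covariate shift: the training points
`z_1, ..., z_n` are i.i.d. with density `p_X(x) p_{Y|X}(y|x)`, and the test point `z_{n+1}`
has input density `p̃_{X; z_{1:n}}` (induced by the multiset of training data) and the same
conditional label density `p_{Y|X}`. -/
def fcsDensity {𝒳 : Type*} {n : ℕ}
    (pX : 𝒳 → ℝ) (pYX : 𝒳 → ℝ → ℝ) (pt : Multiset (𝒳 × ℝ) → 𝒳 → ℝ)
    (z : Fin (n + 1) → 𝒳 × ℝ) : ℝ :=
  (∏ i : Fin n, pX (z i.castSucc).1 * pYX (z i.castSucc).1 (z i.castSucc).2) *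
    (pt (allOf fun i : Fin n => z i.castSucc) (z (Fin.last n)).1 *
      pYX (z (Fin.last n)).1 (z (Fin.last n)).2)

/-!
The feedback-covariate-shift density is `∏_{i ≤ n} p_X(x_i) p_{Y|X}(y_i | x_i)` times
`p̃_{X;D}(x_{n+1}) p_{Y|X}(y_{n+1} | x_{n+1})`. Multiplying and dividing the last factor by
`p_X(x_{n+1})` turns it into the symmetric core times the likelihood ratio `v(x_{n+1}; D)`, and
`D` is exactly the multiset of the points other than the last one. Where `p_X(x_{n+1}) = 0` the
ratio is the junk value `0`, but then `p̃_{X;D}(x_{n+1}) = 0` by absolute continuity as well.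
-/

lemma allOf_eq_cons_last {Z : Type*} {n : ℕ} (v : Fin (n + 1) → Z) :
    allOf v = v (Fin.last n) ::ₘ allOf fun i : Fin n => v i.castSucc := by
  rw [allOf, Fin.univ_castSuccEmb, Finset.cons_val, Multiset.map_cons, Finset.map_val,
    Multiset.map_map]
  rfl

lemma prod_map_allOf {Z M : Type*} [CommMonoid M] {n : ℕ} (v : Fin n → Z) (f : Z → M) :
    ((allOf v).map f).prod = ∏ i, f (v i) := by
  rw [allOf, Multiset.map_map]
  rfl

lemma others_last {Z : Type*} [DecidableEq Z] {n : ℕ} (v : Fin (n + 1) → Z) :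
    others v (Fin.last n) = allOf fun i : Fin n => v i.castSucc := by
  rw [others, allOf_eq_cons_last, Multiset.erase_cons_head]

lemma peDensity_ite_last {Z : Type*} [DecidableEq Z] {n : ℕ} (w : Z → Multiset Z → ℝ)
    (h : Multiset Z → ℝ) (v : Fin (n + 1) → Z) :
    peDensity (fun i z D => if i = Fin.last n then w z D else 1) h v
      = w (v (Fin.last n)) (allOf fun i : Fin n => v i.castSucc) * h (allOf v) := by
  simp only [peDensity, Fin.prod_univ_castSucc, if_pos, (Fin.castSucc_lt_last _).ne,
    if_false, Finset.prod_const_one, one_mul, others_last]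

lemma fcsDensity_eq_peDensity {𝒳 : Type*} [DecidableEq 𝒳] {n : ℕ}
    (pX : 𝒳 → ℝ) (pYX : 𝒳 → ℝ → ℝ) (pt : Multiset (𝒳 × ℝ) → 𝒳 → ℝ)
    (habs : ∀ D x, pX x = 0 → pt D x = 0) (z : Fin (n + 1) → 𝒳 × ℝ) :
    fcsDensity pX pYX pt z
      = peDensity (fun i z D => if i = Fin.last n then pt D z.1 / pX z.1 else 1)
          (fun D => (D.map fun z => pX z.1 * pYX z.1 z.2).prod) z := by
  rw [peDensity_ite_last, allOf_eq_cons_last, Multiset.map_cons, Multiset.prod_cons,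
    prod_map_allOf, fcsDensity]
  set D := allOf fun i : Fin n => z i.castSucc
  obtain ⟨x, y⟩ := z (Fin.last n)
  have hratio : pt D x / pX x * pX x = pt D x := div_mul_cancel_of_imp (habs D x)
  linear_combination
    (-pYX x y * ∏ i : Fin n, pX (z i.castSucc).1 * pYX (z i.castSucc).1 (z i.castSucc).2) * hratio

theorem statement_3_general {𝒳 Ω : Type*} [MeasurableSpace 𝒳] [DecidableEq 𝒳] [MeasurableSpace Ω]
    {n : ℕ} (P : Measure Ω)
    (Zf : Fin (n + 1) → Ω → 𝒳 × ℝ)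
    (ν : Measure (𝒳 × ℝ))
    (pX : 𝒳 → ℝ) (pYX : 𝒳 → ℝ → ℝ) (pt : Multiset (𝒳 × ℝ) → 𝒳 → ℝ)
    (habs : ∀ D x, pX x = 0 → pt D x = 0)
    (hFCS : P.map (fun ω i => Zf i ω)
      = (Measure.pi fun _ : Fin (n + 1) => ν).withDensity
          fun v => ENNReal.ofReal (fcsDensity pX pYX pt v)) :
    IsPseudoExchangeable P Zf ν
      (fun i z D => if i = Fin.last n then pt D z.1 / pX z.1 else 1)
      (fun D => (D.map fun z => pX z.1 * pYX z.1 z.2).prod) := by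
  rw [IsPseudoExchangeable, hFCS]
  simp_rw [fcsDensity_eq_peDensity pX pYX pt habs]

/-- Data generated under feedback covariate shift are pseudo-exchangeable
with core function `h(z_1, ..., z_{n+1}) = ∏ i, p_X(x_i) p_{Y|X}(y_i | x_i)` and factor
functions `g_i ≡ 1` for `i ≤ n` and `g_{n+1}(z; D) = v(x; D) = p̃_{X;D}(x) / p_X(x)`. -/
theorem statement_3 {𝒳 Ω : Type*} [MeasurableSpace 𝒳] [DecidableEq 𝒳] [MeasurableSpace Ω]
    {n : ℕ} (P : Measure Ω) [IsProbabilityMeasure P]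
    (Zf : Fin (n + 1) → Ω → 𝒳 × ℝ) (hZf : ∀ i, Measurable (Zf i))
    (ν : Measure (𝒳 × ℝ)) [SigmaFinite ν]
    (pX : 𝒳 → ℝ) (pYX : 𝒳 → ℝ → ℝ) (pt : Multiset (𝒳 × ℝ) → 𝒳 → ℝ)
    (habs : ∀ D x, pX x = 0 → pt D x = 0)
    (hFCS : P.map (fun ω i => Zf i ω)
      = (Measure.pi fun _ : Fin (n + 1) => ν).withDensity
          fun v => ENNReal.ofReal (fcsDensity pX pYX pt v)) :
    IsPseudoExchangeable P Zf ν
      (fun i z D => if i = Fin.last n then pt D z.1 / pX z.1 else 1)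
      (fun D => (D.map fun z => pX z.1 * pYX z.1 z.2).prod) :=
  statement_3_general P Zf ν pX pYX pt habs hFCS

end
end

section
/- Fix distinct nonnegative calibration scores S_(1) < S_(2) < ... < S_(m) with probability masses w_1, ..., w_m and a test mass w_{m+1}, all nonnegative and summing to 1, and fix β ∈ (0, 1). For t ≥ 0 let F_t denote the discrete distribution placing mass w_i at S_(i) for i ≤ m and mass w_{m+1} at t. Then the function t ↦ P( t ≤ RandomizedQuantile_β(F_t) ), where the probability is over the randomization of the randomized β-quantile of F_t, is constant on each of the m+1 intervals [0, S_(1)), (S_(1), S_(2)), ..., (S_(m−1), S_(m)), (S_(m), ∞); moreover its constant value on each interval equals 1 if t is at most the β-quantile lower bound of F_t, equals 0 if t exceeds the β-quantile of F_t, and otherwise equals 1 − (QF_β(F_t) − β)/(QF_β(F_t) − LF_β(F_t)), where QF_β(F_t) and LF_β(F_t) denote the CDF of F_t at its β-quantile and at its β-quantile lower bound. -/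
open MeasureTheory
open scoped BigOperators ENNReal

noncomputable section

/-- The CDF of the discrete distribution placing mass `w i` at the point `s i`. -/
def dCdf {m : ℕ} (s w : Fin m → ℝ) (t : ℝ) : ℝ :=
  ∑ i ∈ Finset.univ.filter fun i => s i ≤ t, w i

/-- The CDF of the discrete distribution, extended to `EReal` (value `0` at `-∞`). -/
def eCdf {m : ℕ} (s w : Fin m → ℝ) (t : EReal) : ℝ :=
  ∑ i ∈ Finset.univ.filter fun i => (s i : EReal) ≤ t, w i

/-- The `β`-quantile of the discrete distribution placing mass `w i` at the point `s i`. -/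
def quantile {m : ℕ} (β : ℝ) (s w : Fin m → ℝ) : ℝ :=
  sInf {t : ℝ | β ≤ dCdf s w t}

/-- The `β`-quantile lower bound (possibly `-∞`). -/
def quantileLB {m : ℕ} (β : ℝ) (s w : Fin m → ℝ) : EReal :=
  sInf {t : EReal | eCdf s w t < β ∧
    β ≤ eCdf s w t + ∑ j ∈ Finset.univ.filter fun j => s j = quantile β s w, w j}

/-- The randomized `β`-quantile, realized via a uniform random value `u ∈ [0, 1]`. -/
def randQuantile {m : ℕ} (β : ℝ) (s w : Fin m → ℝ) (u : ℝ) : EReal :=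
  if u ≤ (dCdf s w (quantile β s w) - β) /
      (dCdf s w (quantile β s w) - eCdf s w (quantileLB β s w))
  then quantileLB β s w
  else (quantile β s w : EReal)

/-- For `t ≥ 0`, `F_t` is the discrete distribution placing mass `w i` at `S i` for `i ≤ m`
and mass `w (m+1)` at `t`; `coverProb β S w t` is the probability, over the uniform
randomization `u ∈ [0, 1]`, that `t` is at most the randomized `β`-quantile of `F_t`. -/
def coverProb {m : ℕ} (β : ℝ) (S : Fin m → ℝ) (w : Fin (m + 1) → ℝ) (t : ℝ) : ℝ≥0∞ :=
  (volume.restrict (Set.Icc (0 : ℝ) 1))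
    {u | (t : EReal) ≤ randQuantile β (Fin.snoc S t) w u}

/-!
The quantile of a discrete distribution is the smallest atom whose CDF value is at least `β`,
and, when the mass `M` of that atom is below `β`, the quantile lower bound is the smallest atom
whose CDF value `c` satisfies `β - M ≤ c < β` (otherwise it is `-∞`). Both are therefore
determined by the relative order of the atoms alone. Moving `t` inside a gap between calibration
scores does not change that order, so it does not change which atoms are the quantile and its
lower bound, their CDF values, or whether `t` lies below either of them; the event
`t ≤ RandomizedQuantile` is then literally the same set of randomizations `u`. Its probability
is read off from `LB < Q` and `F(LB) < β ≤ F(Q)`: the event is all of `[0, 1]`, empty,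
or `(c, 1]` with `c = (QF - β) / (QF - LF)`.
-/

open Finset

theorem restrict_Icc_setOf_le_ite (L : EReal) (Q : ℝ) (hLQ : L < Q) {c : ℝ} (hc : 0 ≤ c)
    (x : ℝ) :
    volume.restrict (Set.Icc 0 1) {u : ℝ | (x : EReal) ≤ if u ≤ c then L else (Q : EReal)}
      = if (x : EReal) ≤ L then 1 else if Q < x then 0 else ENNReal.ofReal (1 - c) := by
  split_ifs with hL hQ
  · have hall (u : ℝ) : (x : EReal) ≤ if u ≤ c then L else (Q : EReal) := by
      split_ifs
      exacts [hL, hL.trans hLQ.le]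
    simp [hall, Real.volume_Icc]
  · have hnone (u : ℝ) : ¬ (x : EReal) ≤ if u ≤ c then L else (Q : EReal) := by
      split_ifs
      exacts [hL, fun hu => (EReal.coe_le_coe_iff.1 hu).not_gt hQ]
    simp [hnone]
  · have hset : {u : ℝ | (x : EReal) ≤ if u ≤ c then L else (Q : EReal)} = Set.Ioi c := by
      ext u
      rw [Set.mem_ofPred_eq, Set.mem_Ioi]
      split_ifs with hu
      · exact iff_of_false hL hu.not_gt
      · exact iff_of_true (EReal.coe_le_coe_iff.2 (not_lt.1 hQ)) (not_le.1 hu)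
    have hinter : Set.Ioi c ∩ Set.Icc 0 1 = Set.Ioc c 1 :=
      Set.ext fun _ => ⟨fun ⟨hcu, _, hu1⟩ => ⟨hcu, hu1⟩,
        fun ⟨hcu, hu1⟩ => ⟨hcu, hc.trans hcu.le, hu1⟩⟩
    rw [hset, Measure.restrict_apply measurableSet_Ioi, hinter, Real.volume_Ioc]

section DiscreteQuantile

variable {n : ℕ} {s w : Fin n → ℝ} {β : ℝ}

def atomMass (s w : Fin n → ℝ) (x : ℝ) : ℝ :=
  ∑ j ∈ univ.filter fun j => s j = x, w j

def IsLeastAtom (s w : Fin n → ℝ) (p : ℝ → Prop) (j : Fin n) : Prop :=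
  p (dCdf s w (s j)) ∧ ∀ k, p (dCdf s w (s k)) → s j ≤ s k

theorem dCdf_mono (hw : ∀ i, 0 ≤ w i) : Monotone (dCdf s w) := fun _ _ hxy =>
  sum_le_sum_of_subset_of_nonneg (fun i hi => by simpa using (mem_filter.1 hi).2.trans hxy)
    fun i _ _ => hw i

@[simp]
theorem eCdf_coe (x : ℝ) : eCdf s w x = dCdf s w x := by
  simp only [eCdf, dCdf, EReal.coe_le_coe_iff]

@[simp]
theorem eCdf_bot : eCdf s w ⊥ = 0 := by
  simp [eCdf]

theorem dCdf_eq_sum_lt_add_atomMass (x : ℝ) :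
    dCdf s w x = ∑ i ∈ univ.filter fun i => s i < x, w i + atomMass s w x := by
  rw [dCdf, atomMass, ← sum_union (disjoint_filter.2 fun _ _ h => h.ne), ← filter_or]
  simp only [le_iff_lt_or_eq]

theorem exists_dCdf_apply_eq_sum (w : Fin n → ℝ) (T : Finset (Fin n)) (hT : T.Nonempty)
    (hdown : ∀ i, ∀ k ∈ T, s i ≤ s k → i ∈ T) :
    ∃ k ∈ T, dCdf s w (s k) = ∑ i ∈ T, w i := by
  obtain ⟨k, hkT, hmax⟩ := T.exists_max_image s hT
  refine ⟨k, hkT, ?_⟩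
  rw [dCdf]
  congr 1
  ext i
  simpa using ⟨fun hi => hdown i k hkT hi, hmax i⟩

theorem exists_isLeastAtom {p : ℝ → Prop} (h : ∃ k, p (dCdf s w (s k))) :
    ∃ j, IsLeastAtom s w p j := by
  classical
  obtain ⟨k, hk⟩ := h
  obtain ⟨j, hj, hmin⟩ := (univ.filter fun k => p (dCdf s w (s k))).exists_min_image s
    ⟨k, by simpa using hk⟩
  simp only [mem_filter, mem_univ, true_and] at hj hmin
  exact ⟨j, hj, hmin⟩

theorem IsLeastAtom.coe_le {p : ℝ → Prop} {j : Fin n} (hj : IsLeastAtom s w p j) (hp0 : ¬ p 0)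
    {x : EReal} (hx : p (eCdf s w x)) : (s j : EReal) ≤ x := by
  have hT : (univ.filter fun i => (s i : EReal) ≤ x).Nonempty := by
    rw [nonempty_iff_ne_empty]
    intro h
    rw [eCdf, h, sum_empty] at hx
    exact hp0 hx
  obtain ⟨k, hk, hkx⟩ := exists_dCdf_apply_eq_sum w _ hT fun i k hk hik => by
    simp only [mem_filter, mem_univ, true_and] at hk ⊢
    exact (EReal.coe_le_coe_iff.2 hik).trans hk
  rw [mem_filter] at hk
  exact (EReal.coe_le_coe_iff.2 (hj.2 k (by rwa [hkx]))).trans hk.2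

theorem quantile_eq_of_isLeastAtom (hβ0 : 0 < β) {j : Fin n}
    (hj : IsLeastAtom s w (β ≤ ·) j) : quantile β s w = s j :=
  IsLeast.csInf_eq ⟨hj.1, fun x hx =>
    EReal.coe_le_coe_iff.1 (hj.coe_le (not_le.2 hβ0) (by rwa [eCdf_coe]))⟩

theorem exists_isLeastAtom_quantile (hw1 : ∑ i, w i = 1) (hβ1 : β ≤ 1) :
    ∃ j, IsLeastAtom s w (β ≤ ·) j := by
  obtain ⟨k, -, hk⟩ := exists_dCdf_apply_eq_sum (s := s) w univ
    (nonempty_of_sum_ne_zero (by rw [hw1]; exact one_ne_zero)) fun i _ _ _ => mem_univ i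
  exact exists_isLeastAtom ⟨k, by rwa [hk, hw1]⟩

theorem exists_isLeastAtom_quantileLB {j₀ : Fin n} (hj₀ : IsLeastAtom s w (β ≤ ·) j₀)
    (hM : atomMass s w (s j₀) < β) :
    ∃ j, IsLeastAtom s w (fun c => c < β ∧ β ≤ c + atomMass s w (s j₀)) j := by
  have hsplit := dCdf_eq_sum_lt_add_atomMass (s := s) (w := w) (s j₀)
  have hT : (univ.filter fun i => s i < s j₀).Nonempty := by
    rw [nonempty_iff_ne_empty]
    intro h
    rw [h, sum_empty, zero_add] at hsplit
    exact hM.not_ge (hsplit ▸ hj₀.1)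
  obtain ⟨k, hk, hkT⟩ := exists_dCdf_apply_eq_sum w _ hT fun i k hk hik => by
    simp only [mem_filter, mem_univ, true_and] at hk ⊢
    exact hik.trans_lt hk
  rw [mem_filter] at hk
  refine exists_isLeastAtom ⟨k, not_le.1 fun h => (hj₀.2 k h).not_gt hk.2, ?_⟩
  rw [hkT, ← hsplit]
  exact hj₀.1

theorem quantileLB_eq_bot (hβ0 : 0 < β) {j₀ : Fin n} (hj₀ : IsLeastAtom s w (β ≤ ·) j₀)
    (hM : β ≤ atomMass s w (s j₀)) : quantileLB β s w = ⊥ := by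
  refine eq_bot_iff.2 (sInf_le ⟨by simpa using hβ0, ?_⟩)
  rw [eCdf_bot, zero_add, quantile_eq_of_isLeastAtom hβ0 hj₀]
  exact hM

theorem quantileLB_eq_of_isLeastAtom (hβ0 : 0 < β) {j₀ j₁ : Fin n}
    (hj₀ : IsLeastAtom s w (β ≤ ·) j₀) (hM : atomMass s w (s j₀) < β)
    (hj₁ : IsLeastAtom s w (fun c => c < β ∧ β ≤ c + atomMass s w (s j₀)) j₁) :
    quantileLB β s w = s j₁ := by
  have hq := quantile_eq_of_isLeastAtom hβ0 hj₀
  refine IsLeast.isGLB ⟨?_, fun x hx => hj₁.coe_le (fun h => ?_) ?_⟩ |>.sInf_eq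
  · rw [Set.mem_ofPred_eq, eCdf_coe, hq]
    exact hj₁.1
  · linarith [h.2]
  · rw [Set.mem_ofPred_eq, hq] at hx
    exact hx

theorem le_dCdf_quantile (hw1 : ∑ i, w i = 1) (hβ0 : 0 < β) (hβ1 : β ≤ 1) :
    β ≤ dCdf s w (quantile β s w) := by
  obtain ⟨j₀, hj₀⟩ := exists_isLeastAtom_quantile (s := s) hw1 hβ1
  rw [quantile_eq_of_isLeastAtom hβ0 hj₀]
  exact hj₀.1

theorem eCdf_quantileLB_lt (hw1 : ∑ i, w i = 1) (hβ0 : 0 < β) (hβ1 : β ≤ 1) :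
    eCdf s w (quantileLB β s w) < β := by
  obtain ⟨j₀, hj₀⟩ := exists_isLeastAtom_quantile (s := s) hw1 hβ1
  rcases le_or_gt β (atomMass s w (s j₀)) with hM | hM
  · rw [quantileLB_eq_bot hβ0 hj₀ hM, eCdf_bot]
    exact hβ0
  · obtain ⟨j₁, hj₁⟩ := exists_isLeastAtom_quantileLB hj₀ hM
    rw [quantileLB_eq_of_isLeastAtom hβ0 hj₀ hM hj₁, eCdf_coe]
    exact hj₁.1.1

theorem quantileLB_lt_quantile (hw : ∀ i, 0 ≤ w i) (hw1 : ∑ i, w i = 1) (hβ0 : 0 < β)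
    (hβ1 : β ≤ 1) : quantileLB β s w < quantile β s w := by
  obtain ⟨j₀, hj₀⟩ := exists_isLeastAtom_quantile (s := s) hw1 hβ1
  rw [quantile_eq_of_isLeastAtom hβ0 hj₀]
  rcases le_or_gt β (atomMass s w (s j₀)) with hM | hM
  · rw [quantileLB_eq_bot hβ0 hj₀ hM]
    exact EReal.bot_lt_coe _
  · obtain ⟨j₁, hj₁⟩ := exists_isLeastAtom_quantileLB hj₀ hM
    rw [quantileLB_eq_of_isLeastAtom hβ0 hj₀ hM hj₁, EReal.coe_lt_coe_iff]
    exact lt_of_not_ge fun h => (hj₀.1.trans (dCdf_mono hw h)).not_gt hj₁.1.1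

theorem restrict_Icc_setOf_le_randQuantile (hw : ∀ i, 0 ≤ w i) (hw1 : ∑ i, w i = 1)
    (hβ0 : 0 < β) (hβ1 : β ≤ 1) (x : ℝ) :
    volume.restrict (Set.Icc 0 1) {u : ℝ | (x : EReal) ≤ randQuantile β s w u}
      = if (x : EReal) ≤ quantileLB β s w then 1
        else if quantile β s w < x then 0
        else ENNReal.ofReal (1 - (dCdf s w (quantile β s w) - β) /
          (dCdf s w (quantile β s w) - eCdf s w (quantileLB β s w))) :=
  have hQF := le_dCdf_quantile (s := s) hw1 hβ0 hβ1
  have hLF := eCdf_quantileLB_lt (s := s) hw1 hβ0 hβ1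
  restrict_Icc_setOf_le_ite _ _ (quantileLB_lt_quantile hw hw1 hβ0 hβ1)
    (div_nonneg (by linarith) (by linarith)) x

end DiscreteQuantile

def SameOrder {n : ℕ} (s s' : Fin n → ℝ) : Prop :=
  ∀ i j, s i ≤ s j ↔ s' i ≤ s' j

namespace SameOrder

variable {n : ℕ} {s s' : Fin n → ℝ} {β : ℝ}

theorem eq_iff (h : SameOrder s s') (i j : Fin n) : s i = s j ↔ s' i = s' j := by
  rw [le_antisymm_iff, le_antisymm_iff, h i j, h j i]

theorem dCdf_apply_eq (h : SameOrder s s') (w : Fin n → ℝ) (j : Fin n) :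
    dCdf s w (s j) = dCdf s' w (s' j) := by
  rw [dCdf, dCdf, filter_congr fun i _ => h i j]

theorem atomMass_apply_eq (h : SameOrder s s') (w : Fin n → ℝ) (j : Fin n) :
    atomMass s w (s j) = atomMass s' w (s' j) := by
  rw [atomMass, atomMass, filter_congr fun i _ => h.eq_iff i j]

theorem isLeastAtom_iff (h : SameOrder s s') (w : Fin n → ℝ) (p : ℝ → Prop) (j : Fin n) :
    IsLeastAtom s w p j ↔ IsLeastAtom s' w p j := by
  simp only [IsLeastAtom, h.dCdf_apply_eq w, h j]

theorem le_randQuantile_iff (h : SameOrder s s') (w : Fin n → ℝ) (hw1 : ∑ i, w i = 1)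
    (hβ0 : 0 < β) (hβ1 : β ≤ 1) (i : Fin n) (u : ℝ) :
    (s i : EReal) ≤ randQuantile β s w u ↔ (s' i : EReal) ≤ randQuantile β s' w u := by
  obtain ⟨j₀, hj₀⟩ := exists_isLeastAtom_quantile (s := s) hw1 hβ1
  have hj₀' := (h.isLeastAtom_iff w _ j₀).1 hj₀
  have hM := h.atomMass_apply_eq w j₀
  have hLB : ((s i : EReal) ≤ quantileLB β s w ↔ (s' i : EReal) ≤ quantileLB β s' w)
      ∧ eCdf s w (quantileLB β s w) = eCdf s' w (quantileLB β s' w) := by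
    rcases le_or_gt β (atomMass s w (s j₀)) with hb | hb
    · rw [quantileLB_eq_bot hβ0 hj₀ hb, quantileLB_eq_bot hβ0 hj₀' (hM ▸ hb)]
      simp
    · obtain ⟨j₁, hj₁⟩ := exists_isLeastAtom_quantileLB hj₀ hb
      have hj₁' := (h.isLeastAtom_iff w _ j₁).1 hj₁
      rw [hM] at hj₁'
      rw [quantileLB_eq_of_isLeastAtom hβ0 hj₀ hb hj₁,
        quantileLB_eq_of_isLeastAtom hβ0 hj₀' (hM ▸ hb) hj₁', EReal.coe_le_coe_iff,
        EReal.coe_le_coe_iff, eCdf_coe, eCdf_coe]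
      exact ⟨h i j₁, h.dCdf_apply_eq w j₁⟩
  rw [randQuantile, randQuantile, quantile_eq_of_isLeastAtom hβ0 hj₀,
    quantile_eq_of_isLeastAtom hβ0 hj₀', h.dCdf_apply_eq w j₀, hLB.2]
  split_ifs
  · exact hLB.1
  · rw [EReal.coe_le_coe_iff, EReal.coe_le_coe_iff]
    exact h i j₀

end SameOrder

theorem sameOrder_snoc {m : ℕ} {S : Fin m → ℝ} {t t' : ℝ} (ht : ∀ i, t ≠ S i)
    (ht' : ∀ i, t' ≠ S i) (h : ∀ i, t < S i ↔ t' < S i) :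
    SameOrder (Fin.snoc S t : Fin (m + 1) → ℝ) (Fin.snoc S t') := by
  intro i j
  induction i using Fin.lastCases <;> induction j using Fin.lastCases <;>
    simp only [Fin.snoc_last, Fin.snoc_castSucc, le_refl]
  case last.cast j => rw [(ht j).le_iff_lt, (ht' j).le_iff_lt, h j]
  case cast.last i => rw [← not_lt, ← not_lt, h i]

theorem statement_12_general {m : ℕ} (S : Fin m → ℝ)
    (w : Fin (m + 1) → ℝ) (hw : ∀ i, 0 ≤ w i) (hw1 : ∑ i, w i = 1)
    (β : ℝ) (hβ : β ∈ Set.Ioo (0 : ℝ) 1) :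
    (∀ t t' : ℝ, 0 ≤ t → 0 ≤ t' → (∀ i, t ≠ S i) → (∀ i, t' ≠ S i) →
      (∀ i, t < S i ↔ t' < S i) → coverProb β S w t = coverProb β S w t')
    ∧ ∀ t : ℝ, 0 ≤ t → (∀ i, t ≠ S i) →
        (((t : EReal) ≤ quantileLB β (Fin.snoc S t) w → coverProb β S w t = 1)
        ∧ (quantile β (Fin.snoc S t) w < t → coverProb β S w t = 0)
        ∧ (¬ (t : EReal) ≤ quantileLB β (Fin.snoc S t) w →
            ¬ quantile β (Fin.snoc S t) w < t →
            coverProb β S w t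
              = ENNReal.ofReal
                  (1 - (dCdf (Fin.snoc S t) w (quantile β (Fin.snoc S t) w) - β) /
                    (dCdf (Fin.snoc S t) w (quantile β (Fin.snoc S t) w)
                      - eCdf (Fin.snoc S t) w (quantileLB β (Fin.snoc S t) w))))) := by
  obtain ⟨hβ0, hβ1⟩ := hβ
  refine ⟨fun t t' _ _ ht ht' hgap => ?_, fun t _ _ => ?_⟩
  · have hsame := sameOrder_snoc ht ht' hgap
    unfold coverProb
    congr 1
    ext u
    simpa using hsame.le_randQuantile_iff w hw1 hβ0 hβ1.le (Fin.last m) u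
  · have hcover : coverProb β S w t = _ :=
      restrict_Icc_setOf_le_randQuantile hw hw1 hβ0 hβ1.le t
    have hLBQ := quantileLB_lt_quantile (s := Fin.snoc S t) hw hw1 hβ0 hβ1.le
    refine ⟨fun hL => by rw [hcover, if_pos hL], fun hQ => ?_,
      fun hL hQ => by rw [hcover, if_neg hL, if_neg hQ]⟩
    have hL : ¬ (t : EReal) ≤ quantileLB β (Fin.snoc S t) w := fun hL =>
      (EReal.coe_lt_coe_iff.1 (hL.trans_lt hLBQ)).not_gt hQ
    rw [hcover, if_neg hL, if_pos hQ]

/-- For distinct nonnegative sorted calibration scores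
`S 1 < ... < S m` with masses `w 1, ..., w m` and test mass `w (m+1)`, the function
`t ↦ P(t ≤ RandomizedQuantile_β(F_t))` is constant on each of the `m + 1` open intervals
between consecutive calibration scores; moreover its value equals `1` if `t` is at most the
`β`-quantile lower bound of `F_t`, equals `0` if `t` exceeds the `β`-quantile of `F_t`, and
otherwise equals `1 − (QF − β)/(QF − LF)`. -/
theorem statement_12 {m : ℕ} (S : Fin m → ℝ) (hS0 : ∀ i, 0 ≤ S i) (hSmono : StrictMono S)
    (w : Fin (m + 1) → ℝ) (hw : ∀ i, 0 ≤ w i) (hw1 : ∑ i, w i = 1)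
    (β : ℝ) (hβ : β ∈ Set.Ioo (0 : ℝ) 1) :
    (∀ t t' : ℝ, 0 ≤ t → 0 ≤ t' → (∀ i, t ≠ S i) → (∀ i, t' ≠ S i) →
      (∀ i, t < S i ↔ t' < S i) → coverProb β S w t = coverProb β S w t')
    ∧ ∀ t : ℝ, 0 ≤ t → (∀ i, t ≠ S i) →
        (((t : EReal) ≤ quantileLB β (Fin.snoc S t) w → coverProb β S w t = 1)
        ∧ (quantile β (Fin.snoc S t) w < t → coverProb β S w t = 0)
        ∧ (¬ (t : EReal) ≤ quantileLB β (Fin.snoc S t) w →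
            ¬ quantile β (Fin.snoc S t) w < t →
            coverProb β S w t
              = ENNReal.ofReal
                  (1 - (dCdf (Fin.snoc S t) w (quantile β (Fin.snoc S t) w) - β) /
                    (dCdf (Fin.snoc S t) w (quantile β (Fin.snoc S t) w)
                      - eCdf (Fin.snoc S t) w (quantileLB β (Fin.snoc S t) w))))) :=
  statement_12_general S w hw hw1 β hβ

end
end
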